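/- arXiv:1610.00487 — 2 statements merged into one kernel-verified Lean document; each statement's English description precedes it below -/
import Mathlib

section
/- Let Z be a finite additive group and let s ≥ 2 be an integer. Let g : Z → ℝ and let ⟨g^{(k)}_ω : k ∈ {1,2}, ω ∈ {0,1}^s∖{0^s}⟩ be a family of real-valued functions on Z. Set I := 𝔼[ g(x) · ∏_{k∈{1,2}} ∏_{ω∈{0,1}^s∖{0^s}} g^{(k)}_ω(x + ω·h_k) | x ∈ Z, h_1 ∈ Z^s, h_2 ∈ Z^s ]. Then |I| ≤ ‖g‖_{U^{2s}(Z)} · ∏_{k∈{1,2}} ∏_{ω∈{0,1}^s∖{0^s}} ‖g^{(k)}_ω‖_{U^{2s}(Z)}. -/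
open Finset

/-- The average of a real-valued function on a finite type. -/
noncomputable def avg (α : Type*) [Fintype α] (f : α → ℝ) : ℝ :=
  (∑ x, f x) / (Fintype.card α : ℝ)

/-- The Gowers uniformity norm `‖f‖_{U^s(Z)}` of `f : Z → ℝ`. -/
noncomputable def gowersNorm (Z : Type*) [AddCommGroup Z] [Fintype Z] (s : ℕ) (f : Z → ℝ) : ℝ :=
  (avg (Z × (Fin s → Z)) fun xh =>
      ∏ ω : Fin s → Bool, f (xh.1 + ∑ i, if ω i then xh.2 i else 0)) ^ (((2 : ℝ) ^ s)⁻¹)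

/-- The weak uniformity norm `‖f‖_{w^s(Z)}` of `f : Z → ℝ`. -/
noncomputable def weakNorm (Z : Type*) [AddCommGroup Z] [Fintype Z] (s : ℕ) (f : Z → ℝ) : ℝ :=
  sSup {r : ℝ | ∃ h : (Fin s → Bool) → Z → ℝ,
    (∀ ω x, h ω x ∈ Set.Icc (-1 : ℝ) 1) ∧
    r = avg (Z × (Fin s → Z)) fun xh =>
      f xh.1 * ∏ ω ∈ Finset.univ.filter (fun ω : Fin s → Bool => ω ≠ fun _ => false),
        h ω (xh.1 + ∑ i, if ω i then xh.2 i else 0)}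

/-!
Put `g` at the vertex `(0, 0)` of the cube `{0,1}^s × {0,1}^s = {0,1}^{2s}`, `g^{(1)}_ω` at
`(ω, 0)`, `g^{(2)}_ω` at `(0, ω)`, and the constant `1` at all other vertices. Then `I` is the
Gowers inner product of this family of `2^{2s}` functions, so the Gowers–Cauchy–Schwarz inequality
bounds `|I|` by the product of their `U^{2s}` norms, in which every `‖1‖ = 1` drops out.

Gowers–Cauchy–Schwarz is proved one direction `j` of the cube at a time: once the directions other
than `j` are fixed, the inner product factorises over the two faces `ω j = 0` and `ω j = 1`, and
Cauchy–Schwarz bounds its square by the inner products of the two families obtained by copying one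
face onto the other. After every direction has been treated, each family is constant.
-/

theorem avg_comp_equiv {α β : Type*} [Fintype α] [Fintype β] (e : α ≃ β) (f : β → ℝ) :
    avg α (f ∘ e) = avg β f := by
  rw [avg, avg, Fintype.card_congr e, Function.comp_def, e.sum_comp]

theorem prod_prod_eq_of_eq_one_off_axes {α β M : Type*} [Fintype α] [Fintype β] [DecidableEq α]
    [DecidableEq β] [CommMonoid M] (T : α → β → M) (a₀ : α) (b₀ : β)
    (hT : ∀ a ≠ a₀, ∀ b ≠ b₀, T a b = 1) :
    ∏ a, ∏ b, T a b = T a₀ b₀ * (∏ a ∈ univ.erase a₀, T a b₀) * ∏ b ∈ univ.erase b₀, T a₀ b := by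
  have hrow : ∀ a ∈ univ.erase a₀, ∏ b, T a b = T a b₀ := fun a ha => by
    rw [← mul_prod_erase _ _ (mem_univ b₀),
      prod_eq_one fun b hb => hT a (ne_of_mem_erase ha) b (ne_of_mem_erase hb), mul_one]
  rw [← mul_prod_erase _ _ (mem_univ a₀), prod_congr rfl hrow, ← mul_prod_erase _ _ (mem_univ b₀)]
  ac_rfl

theorem prod_sumArrow {α β γ M : Type*} [Fintype α] [DecidableEq α] [Fintype β] [DecidableEq β]
    [Fintype γ] [CommMonoid M] (Φ : (α → γ) → (β → γ) → M) :
    ∏ ω : α ⊕ β → γ, Φ (ω ∘ Sum.inl) (ω ∘ Sum.inr) = ∏ a, ∏ b, Φ a b := by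
  rw [← (Equiv.sumArrowEquivProdArrow α β γ).symm.prod_comp, Fintype.prod_prod_type]
  rfl

theorem piecewise_update_of_notMem {ι β : Type*} [DecidableEq ι] {S : Finset ι} {j : ι}
    (hj : j ∉ S) (ε ω : ι → β) (c : β) :
    S.piecewise ε (Function.update ω j c) = (insert j S).piecewise (Function.update ε j c) ω := by
  rw [← update_piecewise_of_notMem _ _ _ hj, piecewise_insert, Function.update_self]
  congr 1
  exact S.piecewise_congr
    (fun i hi => (Function.update_of_ne (ne_of_mem_of_not_mem hi hj) _ _).symm) fun _ _ => rfl

section FunSplitAt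

variable {ι : Type*} [DecidableEq ι]

theorem update_funSplitAt_symm {β : Type*} (j : ι) (b c : β) (ω : {i // i ≠ j} → β) :
    Function.update ((Equiv.funSplitAt j β).symm (b, ω)) j c =
      (Equiv.funSplitAt j β).symm (c, ω) := by
  ext i
  by_cases hi : i = j
  · subst hi
    simp [Equiv.funSplitAt, Equiv.piSplitAt]
  · simp [Equiv.funSplitAt, Equiv.piSplitAt, hi]

theorem sum_ite_funSplitAt_symm {Z : Type*} [AddCommMonoid Z] [Fintype ι] (j : ι) (b : Bool)
    (ω : {i // i ≠ j} → Bool) (t : Z) (h : {i // i ≠ j} → Z) :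
    (∑ i, if (Equiv.funSplitAt j Bool).symm (b, ω) i then (Equiv.funSplitAt j Z).symm (t, h) i
      else 0) = (if b then t else 0) + ∑ i, if ω i then h i else 0 := by
  rw [Fintype.sum_eq_add_sum_subtype_ne _ j]
  congr 1
  · simp [Equiv.funSplitAt, Equiv.piSplitAt]
  · exact sum_congr rfl fun i _ => by simp [Equiv.funSplitAt, Equiv.piSplitAt, i.2]

variable [Fintype ι]

theorem prod_funSplitAt {M : Type*} [CommMonoid M] (j : ι) (F : (ι → Bool) → M) :
    ∏ ω, F ω = (∏ ω, F ((Equiv.funSplitAt j Bool).symm (false, ω))) *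
      ∏ ω, F ((Equiv.funSplitAt j Bool).symm (true, ω)) := by
  rw [← (Equiv.funSplitAt j Bool).symm.prod_comp, Fintype.prod_prod_type, Fintype.prod_bool,
    mul_comm]

theorem prod_mul_prod_update {M : Type*} [CommMonoid M] (Y : (ι → Bool) → M) (j : ι) :
    ∏ ε, Y (Function.update ε j false) * Y (Function.update ε j true) = (∏ ε, Y ε) ^ 2 := by
  rw [prod_funSplitAt j, prod_funSplitAt j Y]
  simp only [update_funSplitAt_symm, prod_mul_distrib]
  exact (sq _).symm

end FunSplitAt

noncomputable def gowersInner (Z : Type*) [AddCommGroup Z] [Fintype Z] (ι : Type*) [Fintype ι]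
    [DecidableEq ι] (f : (ι → Bool) → Z → ℝ) : ℝ :=
  avg (Z × (ι → Z)) fun xh => ∏ ω : ι → Bool, f ω (xh.1 + ∑ i, if ω i then xh.2 i else 0)

section GowersInner

variable {Z : Type*} [AddCommGroup Z] [Fintype Z] {ι : Type*} [Fintype ι] [DecidableEq ι]

noncomputable def gowersSlice (f : (ι → Bool) → Z → ℝ) (j : ι) (b : Bool)
    (h : {i // i ≠ j} → Z) : ℝ :=
  ∑ x, ∏ ω : {i // i ≠ j} → Bool,
    f ((Equiv.funSplitAt j Bool).symm (b, ω)) (x + ∑ i, if ω i then h i else 0)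

theorem gowersInner_eq_sum_gowersSlice (f : (ι → Bool) → Z → ℝ) (j : ι) :
    gowersInner Z ι f = (∑ h, gowersSlice f j false h * gowersSlice f j true h) /
      Fintype.card (Z × (ι → Z)) := by
  set A : Bool → Z → ({i // i ≠ j} → Z) → ℝ := fun b x h => ∏ ω : {i // i ≠ j} → Bool,
    f ((Equiv.funSplitAt j Bool).symm (b, ω)) (x + ∑ i, if ω i then h i else 0)
  rw [gowersInner, avg, Fintype.sum_prod_type]
  congr 1
  calc ∑ x, ∑ h : ι → Z, ∏ ω, f ω (x + ∑ i, if ω i then h i else 0)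
      = ∑ x, ∑ t, ∑ h, A false x h * A true (x + t) h := by
        refine sum_congr rfl fun x _ => ?_
        rw [← (Equiv.funSplitAt j Z).symm.sum_comp, Fintype.sum_prod_type]
        simp only [prod_funSplitAt j, sum_ite_funSplitAt_symm, A, Bool.false_eq_true, if_false,
          if_true, zero_add, add_assoc]
    _ = ∑ h, ∑ x, ∑ t, A false x h * A true (x + t) h :=
        (sum_congr rfl fun _ _ => sum_comm).trans sum_comm
    _ = ∑ h, gowersSlice f j false h * gowersSlice f j true h := by
        refine sum_congr rfl fun h _ => ?_
        rw [gowersSlice, gowersSlice, sum_mul]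
        refine sum_congr rfl fun x _ => ?_
        rw [← mul_sum]
        exact congrArg _ (Equiv.sum_comp (Equiv.addLeft x) fun y => A true y h)

theorem gowersSlice_update (f : (ι → Bool) → Z → ℝ) (j : ι) (b c : Bool)
    (h : {i // i ≠ j} → Z) :
    gowersSlice (fun ω => f (Function.update ω j c)) j b h = gowersSlice f j c h := by
  simp only [gowersSlice, update_funSplitAt_symm]

theorem gowersInner_sq_le (f : (ι → Bool) → Z → ℝ) (j : ι) :
    gowersInner Z ι f ^ 2 ≤ gowersInner Z ι (fun ω => f (Function.update ω j false)) *
      gowersInner Z ι (fun ω => f (Function.update ω j true)) := by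
  simp only [gowersInner_eq_sum_gowersSlice _ j, gowersSlice_update, div_pow,
    div_mul_div_comm, ← sq]
  gcongr
  exact sum_mul_sq_le_sq_mul_sq _ _ _

theorem gowersInner_const_nonneg [Nonempty ι] (g : Z → ℝ) :
    0 ≤ gowersInner Z ι fun _ => g := by
  obtain ⟨j⟩ := ‹Nonempty ι›
  rw [gowersInner_eq_sum_gowersSlice _ j]
  exact div_nonneg
    (sum_nonneg fun h _ => mul_self_nonneg (gowersSlice (fun _ => g) j false h))
    (Nat.cast_nonneg _)

theorem pow_abs_gowersInner_le_prod_piecewise (f : (ι → Bool) → Z → ℝ) (S : Finset ι) :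
    |gowersInner Z ι f| ^ 2 ^ Fintype.card ι ≤
      ∏ ε, |gowersInner Z ι fun ω => f (S.piecewise ε ω)| := by
  induction S using Finset.induction_on with
  | empty => simp [prod_const]
  | insert j S hj ih =>
    refine ih.trans (le_of_pow_le_pow_left₀ two_ne_zero (by positivity) ?_)
    rw [← prod_pow, ← prod_mul_prod_update _ j]
    refine prod_le_prod (fun _ _ => by positivity) fun ε _ => ?_
    rw [sq_abs, ← abs_mul]
    refine le_trans ?_ (le_abs_self _)
    simpa only [piecewise_update_of_notMem hj] using
      gowersInner_sq_le (fun ω => f (S.piecewise ε ω)) j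

theorem gowersInner_comp_arrowCongr {κ : Type*} [Fintype κ] [DecidableEq κ] (e : ι ≃ κ)
    (f : (κ → Bool) → Z → ℝ) :
    gowersInner Z ι (fun ω => f (ω ∘ e.symm)) = gowersInner Z κ f := by
  rw [gowersInner, gowersInner,
    ← avg_comp_equiv ((Equiv.refl Z).prodCongr (e.arrowCongr (Equiv.refl Z)))]
  congr 1
  ext ⟨x, h⟩
  rw [Function.comp_apply, ← (e.arrowCongr (Equiv.refl Bool)).prod_comp]
  refine prod_congr rfl fun ω _ => congrArg _ (congrArg _ ?_)
  simp [Equiv.arrowCongr, ← e.symm.sum_comp]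

theorem gowersNorm_card_eq (g : Z → ℝ) :
    gowersNorm Z (Fintype.card ι) g =
      gowersInner Z ι (fun _ => g) ^ ((2 : ℝ) ^ Fintype.card ι)⁻¹ := by
  rw [← gowersInner_comp_arrowCongr (Fintype.equivFin ι).symm]
  rfl

theorem abs_gowersInner_le_prod_gowersNorm [Nonempty ι] (f : (ι → Bool) → Z → ℝ) :
    |gowersInner Z ι f| ≤ ∏ ε, gowersNorm Z (Fintype.card ι) (f ε) := by
  have hN : ((2 ^ Fintype.card ι : ℕ) : ℝ) = (2 : ℝ) ^ Fintype.card ι := by push_cast; rfl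
  have hpow := pow_abs_gowersInner_le_prod_piecewise f univ
  simp only [piecewise_univ, abs_of_nonneg (gowersInner_const_nonneg _)] at hpow
  simp only [gowersNorm_card_eq, ← hN]
  rw [Real.finsetProd_rpow _ (fun ε => gowersInner Z ι fun _ => f ε)
      fun ε _ => gowersInner_const_nonneg (f ε),
    ← Real.pow_rpow_inv_natCast (abs_nonneg (gowersInner Z ι f)) (pow_ne_zero _ two_ne_zero)]
  gcongr

theorem gowersInner_sum {κ : Type*} [Fintype κ] [DecidableEq κ] (f : (ι ⊕ κ → Bool) → Z → ℝ) :
    gowersInner Z (ι ⊕ κ) f = avg (Z × (ι → Z) × (κ → Z)) fun xh =>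
      ∏ a, ∏ b, f (Sum.elim a b)
        (xh.1 + (∑ i, if a i then xh.2.1 i else 0) + ∑ i, if b i then xh.2.2 i else 0) := by
  rw [gowersInner,
    ← avg_comp_equiv ((Equiv.refl Z).prodCongr (Equiv.sumArrowEquivProdArrow ι κ Z).symm)]
  congr 1
  ext ⟨x, h₁, h₂⟩
  rw [Function.comp_apply, ← (Equiv.sumArrowEquivProdArrow ι κ Bool).symm.prod_comp,
    Fintype.prod_prod_type]
  simp only [Equiv.prodCongr_apply, Equiv.coe_refl, Prod.map_apply, id_eq, Fintype.sum_sum_type,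
    Equiv.sumArrowEquivProdArrow_symm_apply_inl, Equiv.sumArrowEquivProdArrow_symm_apply_inr,
    add_assoc]
  rfl

end GowersInner

theorem gowersNorm_one (Z : Type*) [AddCommGroup Z] [Fintype Z] (n : ℕ) : gowersNorm Z n 1 = 1 := by
  simp [gowersNorm, avg]

section Corner

variable {Z ι : Type*} [Fintype ι] [DecidableEq ι]

noncomputable def cornerFamily (g : Z → ℝ) (g' : Fin 2 → (ι → Bool) → Z → ℝ) (a b : ι → Bool) :
    Z → ℝ :=
  if a = (fun _ => false) then (if b = (fun _ => false) then g else g' 1 b)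
  else if b = (fun _ => false) then g' 0 a else 1

theorem prod_prod_cornerFamily {M : Type*} [CommMonoid M] (g : Z → ℝ)
    (g' : Fin 2 → (ι → Bool) → Z → ℝ) (Ψ : (ι → Bool) → (ι → Bool) → (Z → ℝ) → M)
    (hΨ : ∀ a b, Ψ a b 1 = 1) :
    ∏ a, ∏ b, Ψ a b (cornerFamily g g' a b) =
      Ψ (fun _ => false) (fun _ => false) g *
        (∏ a ∈ univ.erase (fun _ => false), Ψ a (fun _ => false) (g' 0 a)) *
        ∏ b ∈ univ.erase (fun _ => false), Ψ (fun _ => false) b (g' 1 b) := by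
  rw [prod_prod_eq_of_eq_one_off_axes _ (fun _ => false) (fun _ => false)
    fun a ha b hb => by rw [cornerFamily, if_neg ha, if_neg hb, hΨ]]
  refine congr_arg₂ (· * ·) (congr_arg₂ (· * ·) ?_ ?_) ?_
  · rw [cornerFamily, if_pos rfl, if_pos rfl]
  · exact prod_congr rfl fun a ha => by
      rw [cornerFamily, if_neg (ne_of_mem_erase ha), if_pos rfl]
  · exact prod_congr rfl fun b hb => by
      rw [cornerFamily, if_pos rfl, if_neg (ne_of_mem_erase hb)]

variable [AddCommGroup Z] [Fintype Z]

theorem avg_eq_gowersInner_cornerFamily (g : Z → ℝ) (g' : Fin 2 → (ι → Bool) → Z → ℝ) :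
    (avg (Z × (Fin 2 → ι → Z)) fun xh =>
        g xh.1 * ∏ k : Fin 2, ∏ ω ∈ univ.erase (fun _ => false),
          g' k ω (xh.1 + ∑ i, if ω i then xh.2 k i else 0)) =
      gowersInner Z (ι ⊕ ι) fun ω => cornerFamily g g' (ω ∘ Sum.inl) (ω ∘ Sum.inr) := by
  rw [gowersInner_sum,
    ← avg_comp_equiv ((Equiv.refl Z).prodCongr (piFinTwoEquiv fun _ => ι → Z).symm)]
  congr 1
  ext ⟨x, h₁, h₂⟩
  simp only [Sum.elim_comp_inl, Sum.elim_comp_inr]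
  rw [prod_prod_cornerFamily g g' (fun a b φ => φ (x + (∑ i, if a i then h₁ i else 0) +
    ∑ i, if b i then h₂ i else 0)) fun _ _ => rfl]
  simp [Fin.prod_univ_two, mul_assoc]

theorem prod_gowersNorm_cornerFamily (n : ℕ) (g : Z → ℝ) (g' : Fin 2 → (ι → Bool) → Z → ℝ) :
    ∏ ω : ι ⊕ ι → Bool, gowersNorm Z n (cornerFamily g g' (ω ∘ Sum.inl) (ω ∘ Sum.inr)) =
      gowersNorm Z n g *
        ∏ k : Fin 2, ∏ ω ∈ univ.erase (fun _ => false), gowersNorm Z n (g' k ω) := by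
  rw [prod_sumArrow fun a b => gowersNorm Z n (cornerFamily g g' a b),
    prod_prod_cornerFamily g g' (fun _ _ => gowersNorm Z n) fun _ _ => gowersNorm_one Z n,
    Fin.prod_univ_two, mul_assoc]

end Corner

theorem stmt2 (Z : Type) [AddCommGroup Z] [Fintype Z] (s : ℕ) (hs : 2 ≤ s)
    (g : Z → ℝ) (g' : Fin 2 → (Fin s → Bool) → Z → ℝ) :
    |avg (Z × (Fin 2 → Fin s → Z)) fun xh =>
        g xh.1 *
          ∏ k : Fin 2, ∏ ω ∈ Finset.univ.filter (fun ω : Fin s → Bool => ω ≠ fun _ => false),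
            g' k ω (xh.1 + ∑ i, if ω i then xh.2 k i else 0)|
      ≤ gowersNorm Z (2 * s) g *
          ∏ k : Fin 2, ∏ ω ∈ Finset.univ.filter (fun ω : Fin s → Bool => ω ≠ fun _ => false),
            gowersNorm Z (2 * s) (g' k ω) := by
  have : Nonempty (Fin s ⊕ Fin s) := ⟨.inl ⟨0, by omega⟩⟩
  have hgcs := abs_gowersInner_le_prod_gowersNorm
    fun ω : Fin s ⊕ Fin s → Bool => cornerFamily g g' (ω ∘ Sum.inl) (ω ∘ Sum.inr)
  rw [← avg_eq_gowersInner_cornerFamily, prod_gowersNorm_cornerFamily, Fintype.card_sum,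
    Fintype.card_fin, ← two_mul] at hgcs
  simpa only [filter_ne'] using hgcs
end

section
/- Let V be a nonempty finite set and let s ≥ 2 be an integer. Let G : V^s → ℝ and let ⟨G^{(k)}_ω : k ∈ {1,2}, ω ∈ [2]^s∖{1^s}⟩ be a family of real-valued functions on V^s. Identifying V^{s×2} with V^s × V^s (so each x ∈ V^{s×2} is written as x = (y,z) with y,z ∈ V^s), set I := 𝔼[ G(y) · ∏_{k∈{1,2}} ∏_{ω∈[2]^s∖{1^s}} G^{(k)}_ω(π_ω(y,z_k)) | y, z_1, z_2 ∈ V^s ]. Then |I| ≤ ‖G‖_{□_4(V^s)} · ∏_{k∈{1,2}} ∏_{ω∈[2]^s∖{1^s}} ‖G^{(k)}_ω‖_{□_4(V^s)}. -/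
open Finset

/-- The `ℓ`-box norm `‖F‖_{□_ℓ(V^s)}` of `F : V^s → ℝ`.  Here `V^{s×ℓ}` is modelled as
`Fin s → Fin ℓ → V`, an element `ω ∈ [ℓ]^s` as `ω : Fin s → Fin ℓ`, and the projection
`π_ω : V^{s×ℓ} → V^s` sends `x` to `fun i => x i (ω i)`.  The box norm `‖F‖_{□(V^s)}`
is the case `ℓ = 2`. -/
noncomputable def boxNorm (V : Type*) [Fintype V] (s ℓ : ℕ) (F : (Fin s → V) → ℝ) : ℝ :=
  (avg (Fin s → Fin ℓ → V) fun x =>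
      ∏ ω : Fin s → Fin ℓ, F fun i => x i (ω i)) ^ (((ℓ : ℝ) ^ s)⁻¹)

/-- The cut norm `‖F‖_{cut(V^s)}` of `F : V^s → ℝ`; the distinguished element `1^s` of
`[2]^s` is modelled as `fun _ => (0 : Fin 2)`. -/
noncomputable def cutNorm (V : Type*) [Fintype V] (s : ℕ) (F : (Fin s → V) → ℝ) : ℝ :=
  sSup {r : ℝ | ∃ H : (Fin s → Fin 2) → (Fin s → V) → ℝ,
    (∀ ω y, H ω y ∈ Set.Icc (-1 : ℝ) 1) ∧
    r = avg (Fin s → Fin 2 → V) fun x =>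
      F (fun i => x i 0) *
        ∏ ω ∈ Finset.univ.filter (fun ω : Fin s → Fin 2 => ω ≠ fun _ => 0),
          H ω fun i => x i (ω i)}

/-!
The claim is the Gowers–Cauchy–Schwarz inequality `|𝔼_x ∏_ρ F_ρ(π_ρ x)| ≤ ∏_ρ ‖F_ρ‖_{□_ℓ}`
for `ℓ = 4`, applied to the family over `[4]^s` that puts `G` and the `G^{(k)}_ω` at distinct
vertices and the constant `1`, of box norm `1`, everywhere else.

Gowers–Cauchy–Schwarz for even `ℓ` goes by induction on `s ≥ 1`. Fixing the first coordinates
`x₀ ∈ V^ℓ` of `x` leaves a box inner product in dimension `s`, which the induction hypothesis bounds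
by `∏_{ω'} D(x₀, ω')^{1/ℓ^s}` with diagonal averages `D = ‖·‖^{ℓ^s}`. Hölder's inequality in `x₀`
with `ℓ^s` factors bounds its average by `∏_{ω'} (𝔼_{x₀} D(x₀, ω'))^{1/ℓ^s}`. Averaging over `x₀`
first writes `𝔼_{x₀} D(x₀, ω')` as `𝔼_{x'} ∏_a φ_a(x')` with slice averages `φ_a` over the first
coordinate, and Hölder with `ℓ` factors bounds this by `∏_a ‖F_{(a, ω')}‖^{ℓ^s}`, because
`𝔼 φ_a^ℓ = ‖F_{(a, ω')}‖^{ℓ^{s+1}}`. Evenness of `ℓ` makes the diagonal averages nonnegative.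
-/

open scoped BigOperators

section Expect
variable {α β : Type*} [Fintype α] [Fintype β]

lemma avg_eq_expect (f : α → ℝ) : avg α f = 𝔼 a, f a :=
  (Fintype.expect_eq_sum_div_card f).symm

lemma expect_prod_type (f : α × β → ℝ) : 𝔼 p, f p = 𝔼 a, 𝔼 b, f (a, b) := by
  rw [← Finset.expect_product, Finset.univ_product_univ]

lemma expect_fin_succ_pi {n : ℕ} (f : (Fin (n + 1) → α) → ℝ) :
    𝔼 x, f x = 𝔼 a, 𝔼 x : Fin n → α, f (Fin.cons a x) := by
  rw [← expect_prod_type (fun p : α × (Fin n → α) => f (Fin.cons p.1 p.2))]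
  exact (Fintype.expect_equiv (Fin.consEquiv fun _ => α) _ _ fun _ => rfl).symm

lemma prod_fin_succ_pi {n : ℕ} {M : Type*} [CommMonoid M] (f : (Fin (n + 1) → α) → M) :
    ∏ x, f x = ∏ a, ∏ x : Fin n → α, f (Fin.cons a x) := by
  rw [← Fintype.prod_prod_type']
  exact (Fintype.prod_equiv (Fin.consEquiv fun _ => α) _ _ fun _ => rfl).symm

lemma expect_pi_prod {ι : Type*} [Fintype ι] [DecidableEq ι] (f : ι → α → ℝ) :
    𝔼 x : ι → α, ∏ i, f i (x i) = ∏ i, 𝔼 a, f i a := by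
  simp only [Fintype.expect_eq_sum_div_card, Finset.prod_div_distrib, ← Fintype.prod_sum,
    Fintype.card_fun, Finset.prod_const, Finset.card_univ, Nat.cast_pow]

theorem expect_prod_rpow_le_prod_expect_rpow {ι : Type*} (J : Finset ι) (f : ι → α → ℝ)
    (w : ι → ℝ) (hf : ∀ j ∈ J, ∀ a, 0 ≤ f j a) (hw : ∀ j ∈ J, 0 ≤ w j)
    (hw₁ : ∑ j ∈ J, w j = 1) :
    𝔼 a, ∏ j ∈ J, f j a ^ w j ≤ ∏ j ∈ J, (𝔼 a, f j a) ^ w j := by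
  set M := fun j => 𝔼 a, f j a
  have hM : ∀ j ∈ J, 0 ≤ M j := fun j hj => Finset.expect_nonneg fun a _ => hf j hj a
  -- `M j = 0` forces `f j = 0`, so the junk value `f j a / 0 = 0` is harmless.
  have hfM : ∀ j ∈ J, ∀ a, f j a = M j * (f j a / M j) := fun j hj a =>
    (mul_div_cancel_of_imp' fun h =>
      congrFun ((Fintype.expect_eq_zero_iff_of_nonneg (hf j hj)).1 h) a).symm
  have amgm : ∀ a, ∏ j ∈ J, f j a ^ w j ≤
      (∏ j ∈ J, M j ^ w j) * ∑ j ∈ J, w j * (f j a / M j) := by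
    intro a
    calc ∏ j ∈ J, f j a ^ w j = (∏ j ∈ J, M j ^ w j) * ∏ j ∈ J, (f j a / M j) ^ w j := by
          rw [← Finset.prod_mul_distrib]
          refine Finset.prod_congr rfl fun j hj => ?_
          rw [← Real.mul_rpow (hM j hj) (div_nonneg (hf j hj a) (hM j hj)), ← hfM j hj a]
      _ ≤ _ := by
          gcongr
          · exact Finset.prod_nonneg fun j hj => Real.rpow_nonneg (hM j hj) _
          · exact Real.geom_mean_le_arith_mean_weighted J w _ hw hw₁
              fun j hj => div_nonneg (hf j hj a) (hM j hj)
  calc 𝔼 a, ∏ j ∈ J, f j a ^ w j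
      ≤ 𝔼 a, (∏ j ∈ J, M j ^ w j) * ∑ j ∈ J, w j * (f j a / M j) :=
        Finset.expect_le_expect fun a _ => amgm a
    _ = (∏ j ∈ J, M j ^ w j) * ∑ j ∈ J, w j * (M j / M j) := by
        simp only [← Finset.mul_expect, Finset.expect_sum_comm, ← Finset.expect_div, M]
    _ ≤ (∏ j ∈ J, M j ^ w j) * ∑ j ∈ J, w j := by
        gcongr with j hj
        · exact Finset.prod_nonneg fun j hj => Real.rpow_nonneg (hM j hj) _
        · exact mul_le_of_le_one_right (hw j hj) (div_self_le_one _)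
    _ = ∏ j ∈ J, M j ^ w j := by rw [hw₁, mul_one]

lemma expect_prod_rpow_inv_card_le {ι : Type*} [Fintype ι] [Nonempty ι]
    (f : ι → α → ℝ) (hf : ∀ j a, 0 ≤ f j a) :
    𝔼 a, ∏ j, f j a ^ (Fintype.card ι : ℝ)⁻¹ ≤ ∏ j, (𝔼 a, f j a) ^ (Fintype.card ι : ℝ)⁻¹ :=
  expect_prod_rpow_le_prod_expect_rpow _ f _ (fun j _ => hf j) (fun _ _ => by positivity) <| by
    rw [Finset.sum_const, Finset.card_univ, nsmul_eq_mul,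
      mul_inv_cancel₀ (Nat.cast_ne_zero.2 Fintype.card_ne_zero)]

end Expect

lemma Even.pow_rpow_inv_natCast {ℓ : ℕ} (hℓ : Even ℓ) (hℓ₀ : ℓ ≠ 0) (x : ℝ) :
    (x ^ ℓ) ^ (ℓ : ℝ)⁻¹ = |x| := by
  rw [← hℓ.pow_abs, Real.pow_rpow_inv_natCast (abs_nonneg x) hℓ₀]

section Box
variable {V : Type*} [Fintype V] {ℓ : ℕ}

noncomputable def boxInner (V : Type*) [Fintype V] (s ℓ : ℕ)
    (F : (Fin s → Fin ℓ) → (Fin s → V) → ℝ) : ℝ :=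
  𝔼 x : Fin s → Fin ℓ → V, ∏ ω, F ω fun i => x i (ω i)

noncomputable def boxSlice {n : ℕ} (f : (Fin (n + 1) → V) → ℝ) (x : Fin n → Fin ℓ → V) : ℝ :=
  𝔼 v, ∏ ω : Fin n → Fin ℓ, f (Fin.cons v fun i => x i (ω i))

lemma boxNorm_eq_boxInner {s : ℕ} (f : (Fin s → V) → ℝ) :
    boxNorm V s ℓ f = boxInner V s ℓ (fun _ => f) ^ ((ℓ : ℝ) ^ s)⁻¹ := by
  rw [boxNorm, avg_eq_expect, boxInner]

lemma boxNorm_one [Nonempty V] {s : ℕ} : boxNorm V s ℓ 1 = 1 := by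
  simp [boxNorm, avg_eq_expect]

lemma boxInner_succ {n : ℕ} (F : (Fin (n + 1) → Fin ℓ) → (Fin (n + 1) → V) → ℝ) :
    boxInner V (n + 1) ℓ F = 𝔼 x₀ : Fin ℓ → V,
      boxInner V n ℓ fun ω u => ∏ a, F (Fin.cons a ω) (Fin.cons (x₀ a) u) := by
  simp only [boxInner]
  rw [expect_fin_succ_pi]
  refine Finset.expect_congr rfl fun x₀ _ => Finset.expect_congr rfl fun x _ => ?_
  rw [prod_fin_succ_pi, Finset.prod_comm]
  refine Finset.prod_congr rfl fun ω _ => Finset.prod_congr rfl fun a _ => ?_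
  congr 1
  funext i
  cases i using Fin.cases <;> simp

lemma expect_boxInner_prod_cons {n : ℕ} (f : Fin ℓ → (Fin (n + 1) → V) → ℝ) :
    𝔼 x₀ : Fin ℓ → V, boxInner V n ℓ (fun _ u => ∏ a, f a (Fin.cons (x₀ a) u)) =
      𝔼 x : Fin n → Fin ℓ → V, ∏ a, boxSlice (f a) x := by
  simp only [boxInner, boxSlice]
  rw [Finset.expect_comm]
  refine Finset.expect_congr rfl fun x _ => ?_
  simp only [Finset.prod_comm (s := (Finset.univ : Finset (Fin n → Fin ℓ)))]
  exact expect_pi_prod fun a v => ∏ ω : Fin n → Fin ℓ, f a (Fin.cons v fun i => x i (ω i))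

lemma boxInner_succ_const {n : ℕ} (f : (Fin (n + 1) → V) → ℝ) :
    boxInner V (n + 1) ℓ (fun _ => f) = 𝔼 x : Fin n → Fin ℓ → V, boxSlice f x ^ ℓ := by
  rw [boxInner_succ]
  simpa using expect_boxInner_prod_cons (ℓ := ℓ) fun _ => f

lemma boxInner_const_nonneg (hℓ : Even ℓ) {n : ℕ} (f : (Fin (n + 1) → V) → ℝ) :
    0 ≤ boxInner V (n + 1) ℓ (fun _ => f) := by
  rw [boxInner_succ_const]
  exact Finset.expect_nonneg fun x _ => hℓ.pow_nonneg _

lemma boxInner_fin_one (F : (Fin 1 → Fin ℓ) → (Fin 1 → V) → ℝ) :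
    boxInner V 1 ℓ F = ∏ a, 𝔼 v, F (fun _ => a) (fun _ => v) := by
  calc boxInner V 1 ℓ F = 𝔼 x : Fin ℓ → V, ∏ a, F (fun _ => a) (fun _ => x a) := by
        refine Fintype.expect_equiv (Equiv.funUnique (Fin 1) (Fin ℓ → V)) _ _ fun x => ?_
        refine Fintype.prod_equiv (Equiv.funUnique (Fin 1) (Fin ℓ)) _ _ fun ω => ?_
        congr <;> funext i <;> rw [Subsingleton.elim i default] <;> rfl
    _ = _ := expect_pi_prod fun a v => F (fun _ => a) (fun _ => v)

lemma boxNorm_fin_one (hℓ : Even ℓ) [NeZero ℓ] (f : (Fin 1 → V) → ℝ) :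
    boxNorm V 1 ℓ f = |𝔼 v, f fun _ => v| := by
  rw [boxNorm_eq_boxInner, boxInner_fin_one, Finset.prod_const, Finset.card_univ,
    Fintype.card_fin, pow_one, hℓ.pow_rpow_inv_natCast (NeZero.ne ℓ)]

lemma abs_boxInner_fin_one_le (hℓ : Even ℓ) [NeZero ℓ] (F : (Fin 1 → Fin ℓ) → (Fin 1 → V) → ℝ) :
    |boxInner V 1 ℓ F| ≤ ∏ ω, boxNorm V 1 ℓ (F ω) := by
  rw [boxInner_fin_one, Finset.abs_prod]
  refine le_of_eq (Fintype.prod_equiv (Equiv.funUnique (Fin 1) (Fin ℓ)).symm _ _ fun a => ?_)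
  rw [boxNorm_fin_one hℓ]
  rfl

lemma expect_prod_boxSlice_le (hℓ : Even ℓ) [NeZero ℓ] {n : ℕ}
    (f : Fin ℓ → (Fin (n + 1) → V) → ℝ) :
    𝔼 x : Fin n → Fin ℓ → V, ∏ a, boxSlice (f a) x ≤
      ∏ a, boxInner V (n + 1) ℓ (fun _ => f a) ^ (ℓ : ℝ)⁻¹ := by
  have holder := expect_prod_rpow_inv_card_le
    (fun a (x : Fin n → Fin ℓ → V) => boxSlice (f a) x ^ ℓ) fun a x => hℓ.pow_nonneg _
  simp only [Fintype.card_fin, hℓ.pow_rpow_inv_natCast (NeZero.ne ℓ), ← boxInner_succ_const]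
    at holder
  refine le_trans (Finset.expect_le_expect fun x _ => ?_) holder
  rw [← Finset.abs_prod]
  exact le_abs_self _

theorem abs_boxInner_le_prod_boxNorm (hℓ : Even ℓ) [NeZero ℓ] {s : ℕ} (hs : 1 ≤ s)
    (F : (Fin s → Fin ℓ) → (Fin s → V) → ℝ) :
    |boxInner V s ℓ F| ≤ ∏ ω, boxNorm V s ℓ (F ω) := by
  induction s, hs using Nat.le_induction with
  | base => exact abs_boxInner_fin_one_le hℓ F
  | succ n hn ih =>
    obtain ⟨m, rfl⟩ : ∃ m, n = m + 1 := ⟨n - 1, by omega⟩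
    set K : (Fin ℓ → V) → (Fin (m + 1) → Fin ℓ) → (Fin (m + 1) → V) → ℝ :=
      fun x₀ ω u => ∏ a, F (Fin.cons a ω) (Fin.cons (x₀ a) u)
    have hK : ∀ ω, 0 ≤ 𝔼 x₀, boxInner V (m + 1) ℓ fun _ => K x₀ ω := fun ω =>
      Finset.expect_nonneg fun _ _ => boxInner_const_nonneg hℓ _
    have holder := expect_prod_rpow_inv_card_le
      (fun ω x₀ => boxInner V (m + 1) ℓ fun _ => K x₀ ω) fun ω x₀ => boxInner_const_nonneg hℓ _
    rw [show (Fintype.card (Fin (m + 1) → Fin ℓ) : ℝ) = (ℓ : ℝ) ^ (m + 1) by simp] at holder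
    calc |boxInner V (m + 1 + 1) ℓ F| = |𝔼 x₀, boxInner V (m + 1) ℓ (K x₀)| := by
          rw [boxInner_succ]
      _ ≤ 𝔼 x₀, ∏ ω, boxNorm V (m + 1) ℓ (K x₀ ω) :=
          (Finset.abs_expect_le _ _).trans (Finset.expect_le_expect fun x₀ _ => ih (K x₀))
      _ ≤ ∏ ω, (𝔼 x₀, boxInner V (m + 1) ℓ fun _ => K x₀ ω) ^ ((ℓ : ℝ) ^ (m + 1))⁻¹ := by
          simpa only [boxNorm_eq_boxInner] using holder
      _ ≤ ∏ ω, (∏ a, boxInner V (m + 1 + 1) ℓ (fun _ => F (Fin.cons a ω)) ^ (ℓ : ℝ)⁻¹) ^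
            ((ℓ : ℝ) ^ (m + 1))⁻¹ := by
          refine Finset.prod_le_prod (fun ω _ => Real.rpow_nonneg (hK ω) _) fun ω _ => ?_
          refine Real.rpow_le_rpow (hK ω) ?_ (by positivity)
          rw [expect_boxInner_prod_cons]
          exact expect_prod_boxSlice_le hℓ _
      _ = ∏ ω, boxNorm V (m + 1 + 1) ℓ (F ω) := by
          rw [prod_fin_succ_pi (n := m + 1), Finset.prod_comm]
          refine Finset.prod_congr rfl fun ω _ => ?_
          rw [← Real.finsetProd_rpow _ _ fun a _ =>
            Real.rpow_nonneg (boxInner_const_nonneg hℓ _) _]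
          refine Finset.prod_congr rfl fun a _ => ?_
          rw [← Real.rpow_mul (boxInner_const_nonneg hℓ _), boxNorm_eq_boxInner]
          ring_nf

theorem abs_expect_prod_le_prod_boxNorm [Nonempty V] (hℓ : Even ℓ) [NeZero ℓ] {s : ℕ}
    (hs : 1 ≤ s) {ι : Type*} [Fintype ι] (e : ι → Fin s → Fin ℓ) (he : Function.Injective e)
    (F : ι → (Fin s → V) → ℝ) :
    |𝔼 x : Fin s → Fin ℓ → V, ∏ i, F i fun j => x j (e i j)| ≤ ∏ i, boxNorm V s ℓ (F i) := by
  classical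
  have hextend : ∀ ρ ∉ Set.range e, Function.extend e F 1 ρ = 1 := fun ρ hρ =>
    Function.extend_apply' _ _ _ fun ⟨i, hi⟩ => hρ ⟨i, hi⟩
  calc |𝔼 x : Fin s → Fin ℓ → V, ∏ i, F i fun j => x j (e i j)|
      = |boxInner V s ℓ (Function.extend e F 1)| := by
        refine congrArg _ (Finset.expect_congr rfl fun x _ => ?_)
        refine Fintype.prod_of_injective e he _ _ (fun ρ hρ => ?_) fun i => ?_
        · rw [hextend ρ hρ, Pi.one_apply]
        · rw [he.extend_apply]
    _ ≤ ∏ ρ, boxNorm V s ℓ (Function.extend e F 1 ρ) := abs_boxInner_le_prod_boxNorm hℓ hs _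
    _ = ∏ i, boxNorm V s ℓ (F i) := by
        refine (Fintype.prod_of_injective e he _ _ (fun ρ hρ => ?_) fun i => ?_).symm
        · rw [hextend ρ hρ, boxNorm_one]
        · rw [he.extend_apply]

end Box

/-- Writing `x : Fin s → Fin 4 → V` by columns, column `1` plays `y`, column `k + 2` plays `z k`
and column `0` is a dummy; `none` indexes the factor `G`. -/
def factorVertex (s : ℕ) :
    Option (Fin 2 × {ω : Fin s → Fin 2 // ω ≠ fun _ => 0}) → Fin s → Fin 4
  | none => fun _ => 1
  | some (k, ω) => fun i => if ω.1 i = 0 then 1 else k.succ.succ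

lemma factorVertex_injective (s : ℕ) : Function.Injective (factorVertex s) := by
  have hcol : ∀ k k' b b' : Fin 2, (if b = 0 then 1 else k.succ.succ : Fin 4) =
      (if b' = 0 then 1 else k'.succ.succ) → b = b' ∧ (b ≠ 0 → k = k') := by decide
  have hone : ∀ k b : Fin 2, (1 : Fin 4) = (if b = 0 then 1 else k.succ.succ) → b = 0 := by decide
  rintro (_ | ⟨k, ω, hω⟩) (_ | ⟨k', ω', hω'⟩) h
  · rfl
  · obtain ⟨i, hi⟩ := Function.ne_iff.1 hω'
    exact absurd (hone k' _ (congrFun h i)) hi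
  · obtain ⟨i, hi⟩ := Function.ne_iff.1 hω
    exact absurd (hone k _ (congrFun h i).symm) hi
  · obtain ⟨i, hi⟩ := Function.ne_iff.1 hω
    obtain rfl := (hcol _ _ _ _ (congrFun h i)).2 hi
    obtain rfl : ω = ω' := funext fun j => (hcol _ _ _ _ (congrFun h j)).1
    rfl

lemma expect_eq_expect_columns {V : Type*} [Fintype V] [Nonempty V] {s : ℕ}
    (g : (Fin s → V) × (Fin 2 → Fin s → V) → ℝ) :
    𝔼 p, g p = 𝔼 x : Fin s → Fin 4 → V, g (fun i => x i 1, fun k i => x i k.succ.succ) := by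
  rw [← Fintype.expect_equiv (Equiv.piComm fun (_ : Fin 4) (_ : Fin s) => V) _ _ fun _ => rfl,
    expect_fin_succ_pi]
  simp only [expect_fin_succ_pi (n := 2), Equiv.piComm_apply, Function.swap, Fin.cons_one,
    Fin.cons_succ, Fin.cons_zero]
  rw [expect_prod_type, Fintype.expect_const]

lemma prod_option_nonzero {s : ℕ} {M : Type*} [CommMonoid M]
    (φ : Option (Fin 2 × {ω : Fin s → Fin 2 // ω ≠ fun _ => 0}) → M)
    (g : Fin 2 → (Fin s → Fin 2) → M) (hφ : ∀ k ω, φ (some (k, ω)) = g k ω) :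
    ∏ o, φ o = φ none * ∏ k, ∏ ω ∈ Finset.univ.filter (fun ω : Fin s → Fin 2 => ω ≠ fun _ => 0),
      g k ω := by
  rw [Fintype.prod_option, Fintype.prod_prod_type]
  congr 1
  refine Finset.prod_congr rfl fun k _ => ?_
  rw [Finset.prod_subtype _ (fun ω => Finset.mem_filter_univ ω) (g k)]
  exact Finset.prod_congr rfl fun ω _ => hφ k ω

theorem stmt5 (V : Type) [Fintype V] [Nonempty V] (s : ℕ) (hs : 2 ≤ s)
    (G : (Fin s → V) → ℝ) (G' : Fin 2 → (Fin s → Fin 2) → (Fin s → V) → ℝ) :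
    /- The average is over `(y, z)` with `y ∈ V^s` and `z k ∈ V^s` for `k ∈ {1,2}`;
    the projection `π_ω(y, z k)` is `fun i => if ω i = 0 then y i else z k i`
    (recall `1^s` is modelled as `fun _ => (0 : Fin 2)`). -/
    |avg ((Fin s → V) × (Fin 2 → Fin s → V)) fun yz =>
        G yz.1 *
          ∏ k : Fin 2, ∏ ω ∈ Finset.univ.filter (fun ω : Fin s → Fin 2 => ω ≠ fun _ => 0),
            G' k ω fun i => if ω i = 0 then yz.1 i else yz.2 k i|
      ≤ boxNorm V s 4 G *
          ∏ k : Fin 2, ∏ ω ∈ Finset.univ.filter (fun ω : Fin s → Fin 2 => ω ≠ fun _ => 0),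
            boxNorm V s 4 (G' k ω) := by
  have key := abs_expect_prod_le_prod_boxNorm (V := V) (by decide : Even 4) (by omega)
    (factorVertex s) (factorVertex_injective s) fun o => o.elim G fun p => G' p.1 p.2
  rw [avg_eq_expect, expect_eq_expect_columns]
  convert key using 1
  · refine congrArg _ (Finset.expect_congr rfl fun x _ => ?_)
    rw [prod_option_nonzero _ (fun k ω => G' k ω fun i => x i (if ω i = 0 then 1 else k.succ.succ))
      fun k ω => rfl]
    simp only [apply_ite]
    rfl
  · symm
    exact prod_option_nonzero _ (fun k ω => boxNorm V s 4 (G' k ω)) fun k ω => rfl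
end
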